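/- Let S ⊆ {1,…,p} with T ⊄ S and |S \ T| ≤ 3s*, and set B = T \ S (nonempty). Let i ∈ B maximize ‖Φ_{S∪{j}} Xθ‖ over j ∈ B. Assume event E_n holds, min_{j∈T} θ_j² ≥ 8βD log p / (nν²), βD ≥ 2L, and 2/β ≤ 3D log p. Then log(π(S ∪ {i}) / π(S)) ≥ (D/2) log p; equivalently π(S ∪ {i}) ≥ p^{D/2} π(S). -/

import Mathlib

/-!
Write `v = (I - Φ_S) X_i`. Adding the column `X_i` to `S` raises `‖Φ_S y‖²` by
`⟪v, y⟫² / ‖v‖²` and the trace of `Φ_S` by one, so the log-ratio is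
`⟪v, Y⟫² / (β ‖v‖²) - D log p - 2 / β`.

The restricted eigenvalue condition gives `‖v‖² ≥ n ν` and
`‖(I - Φ_S) X θ‖² ≥ n ν ∑_{j ∈ T \ S} θ_j²`. Expanding the left side as
`∑_{j ∈ T \ S} θ_j ⟪v_j, X θ⟫` and applying Cauchy–Schwarz, maximality of `i` together with
`‖v_j‖² ≤ n` and the beta-min condition yields `⟪v, X θ⟫² ≥ 8 β D log p ‖v‖²`. On `E_n` the
noise term `⟪v, ε⟫²` is at most a sixteenth of this, so `⟪v, Y⟫² ≥ (9/2) β D log p ‖v‖²`, and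
the log-ratio is at least `(9/2 - 1 - 3) D log p`.
-/

open scoped BigOperators
open Finset

noncomputable section

/-- Span of the columns `X j`, `j ∈ S`. -/
def colSpan {n p : ℕ} (X : Fin p → EuclideanSpace ℝ (Fin n)) (S : Finset (Fin p)) :
    Submodule ℝ (EuclideanSpace ℝ (Fin n)) :=
  Submodule.span ℝ (X '' ↑S)

/-- `Φ_S`, the orthogonal projection of ℝ^n onto the span of the columns in `S`. -/
noncomputable def proj {n p : ℕ} (X : Fin p → EuclideanSpace ℝ (Fin n)) (S : Finset (Fin p)) :
    EuclideanSpace ℝ (Fin n) →ₗ[ℝ] EuclideanSpace ℝ (Fin n) :=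
  (colSpan X S).subtype ∘ₗ ((colSpan X S).orthogonalProjection).toLinearMap

/-- Restricted eigenvalue condition: `‖X_S w‖² ≥ n ν ‖w‖²` for all `S` with `|S| ≤ m`. -/
def RECond {n p : ℕ} (X : Fin p → EuclideanSpace ℝ (Fin n)) (ν : ℝ) (m : ℕ) : Prop :=
  ∀ S : Finset (Fin p), S.card ≤ m → ∀ w : Fin p → ℝ,
    (n : ℝ) * ν * ∑ j ∈ S, w j ^ 2 ≤ ‖∑ j ∈ S, w j • X j‖ ^ 2

/-- The unnormalized weight exp(G(S,Y) − m(S)), where G(S,Y) = ‖Φ_S Y‖²/β and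
m(S) = D|S| log p + (2/β) trace(Φ_S) + (4n/β) 1{|S| > 4s}. -/
noncomputable def postWt {n p : ℕ} (X : Fin p → EuclideanSpace ℝ (Fin n))
    (Y : EuclideanSpace ℝ (Fin n)) (β D : ℝ) (s : ℕ) (S : Finset (Fin p)) : ℝ :=
  Real.exp (‖proj X S Y‖ ^ 2 / β -
    (D * S.card * Real.log p +
      2 * LinearMap.trace ℝ (EuclideanSpace ℝ (Fin n)) (proj X S) / β +
      if 4 * s < S.card then 4 * n / β else 0))

/-- The probability distribution π(S) ∝ exp(G(S,Y) − m(S)) on subsets of {1,…,p}. -/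
noncomputable def postPi {n p : ℕ} (X : Fin p → EuclideanSpace ℝ (Fin n))
    (Y : EuclideanSpace ℝ (Fin n)) (β D : ℝ) (s : ℕ) (S : Finset (Fin p)) : ℝ :=
  postWt X Y β D s S / ∑ S' : Finset (Fin p), postWt X Y β D s S'

open scoped RealInnerProductSpace

namespace Submodule

variable {𝕜 E : Type*} [RCLike 𝕜] [NormedAddCommGroup E] [InnerProductSpace 𝕜 E]

theorem starProjection_sup_apply_of_isOrtho {U V : Submodule 𝕜 E} [U.HasOrthogonalProjection]
    [V.HasOrthogonalProjection] [(U ⊔ V).HasOrthogonalProjection] (h : U ⟂ V) (y : E) :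
    (U ⊔ V).starProjection y = U.starProjection y + V.starProjection y := by
  refine eq_starProjection_of_mem_of_inner_eq_zero
    (add_mem_sup (starProjection_apply_mem U y) (starProjection_apply_mem V y)) fun w hw => ?_
  obtain ⟨u, hu, v, hv, rfl⟩ := mem_sup.1 hw
  have hVu : inner 𝕜 (V.starProjection y) u = 0 := h hu _ (starProjection_apply_mem V y)
  have hUv : inner 𝕜 (U.starProjection y) v = 0 := h.symm hv _ (starProjection_apply_mem U y)
  have hu' := starProjection_inner_eq_zero y u hu
  have hv' := starProjection_inner_eq_zero y v hv
  simp only [inner_add_right, inner_sub_left, inner_add_left] at hu' hv' ⊢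
  linear_combination hu' + hv' - hVu - hUv

theorem sup_span_singleton_sub_starProjection (K : Submodule 𝕜 E) [K.HasOrthogonalProjection]
    (x : E) : K ⊔ 𝕜 ∙ (x - K.starProjection x) = K ⊔ 𝕜 ∙ x := by
  refine le_antisymm (sup_le le_sup_left ?_) (sup_le le_sup_left ?_) <;>
    rw [span_singleton_le_iff_mem]
  · exact sub_mem (mem_sup_right (mem_span_singleton_self x))
      (mem_sup_left (starProjection_apply_mem K x))
  · simpa using add_mem (mem_sup_right (mem_span_singleton_self _))
      (mem_sup_left (starProjection_apply_mem K x) :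
        K.starProjection x ∈ K ⊔ 𝕜 ∙ (x - K.starProjection x))

theorem trace_starProjection [FiniteDimensional 𝕜 E] (K : Submodule 𝕜 E) :
    LinearMap.trace 𝕜 E K.starProjection = Module.finrank 𝕜 K :=
  LinearMap.IsProj.trace ⟨starProjection_apply_mem K, fun _ => starProjection_eq_self_iff.2⟩

end Submodule

section RealInner

variable {E : Type*} [NormedAddCommGroup E] [InnerProductSpace ℝ E]

theorem norm_sq_starProjection_span_singleton (v y : E) :
    ‖(ℝ ∙ v).starProjection y‖ ^ 2 = ⟪v, y⟫ ^ 2 / ‖v‖ ^ 2 := by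
  rw [Submodule.starProjection_singleton, norm_smul, mul_pow, Real.norm_eq_abs, sq_abs,
    RCLike.ofReal_real_eq_id, id, div_pow]
  rcases eq_or_ne v 0 with rfl | hv
  · simp
  · field_simp

theorem Submodule.norm_sq_starProjection_sup_span_singleton (K : Submodule ℝ E)
    [K.HasOrthogonalProjection] (x : E) [(K ⊔ ℝ ∙ x).HasOrthogonalProjection] (y : E) :
    ‖(K ⊔ ℝ ∙ x).starProjection y‖ ^ 2 = ‖K.starProjection y‖ ^ 2 +
      ⟪x - K.starProjection x, y⟫ ^ 2 / ‖x - K.starProjection x‖ ^ 2 := by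
  set v := x - K.starProjection x
  have hKv : K ⟂ ℝ ∙ v := (isOrtho_orthogonal_right K).mono_right
    (span_singleton_le_iff_mem _ _ |>.2 (sub_starProjection_mem_orthogonal x))
  -- Replacing `x` by its component `v` orthogonal to `K` splits the projection into two.
  have hsup := sup_span_singleton_sub_starProjection K x
  have : (K ⊔ ℝ ∙ v).HasOrthogonalProjection := hsup ▸ ‹_›
  simp only [← hsup]
  have h0 : ⟪K.starProjection y, (ℝ ∙ v).starProjection y⟫ = 0 :=
    hKv.symm (starProjection_apply_mem _ y) _ (starProjection_apply_mem K y)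
  rw [starProjection_sup_apply_of_isOrtho hKv, ← norm_sq_starProjection_span_singleton,
    norm_add_sq_real, h0]
  ring

theorem sq_norm_sq_sum_smul_le {ι : Type*} (B : Finset ι) (v : ι → E) (θ : ι → ℝ) {M : ℝ}
    (h : ∀ j ∈ B, ⟪v j, ∑ k ∈ B, θ k • v k⟫ ^ 2 ≤ M) :
    (‖∑ k ∈ B, θ k • v k‖ ^ 2) ^ 2 ≤ (∑ j ∈ B, θ j ^ 2) * (#B * M) := by
  set z := ∑ k ∈ B, θ k • v k
  have hz : ‖z‖ ^ 2 = ∑ j ∈ B, θ j * ⟪v j, z⟫ := by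
    rw [← real_inner_self_eq_norm_sq]
    nth_rw 1 [show z = ∑ k ∈ B, θ k • v k from rfl]
    simp only [sum_inner, real_inner_smul_left]
  calc (‖z‖ ^ 2) ^ 2 ≤ (∑ j ∈ B, θ j ^ 2) * ∑ j ∈ B, ⟪v j, z⟫ ^ 2 :=
        hz ▸ sum_mul_sq_le_sq_mul_sq B θ _
    _ ≤ (∑ j ∈ B, θ j ^ 2) * (#B * M) := by
        gcongr
        simpa using sum_le_card_nsmul B _ M h

end RealInner

theorem Finset.card_add_one_le_card_sdiff_add_card {α : Type*} [DecidableEq α]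
    {S T : Finset α} {i : α} (hi : i ∈ T \ S) : S.card + 1 ≤ (S \ T).card + T.card := by
  rw [card_sdiff_add_card, ← card_insert_of_notMem (mem_sdiff.1 hi).2]
  exact card_le_card (insert_subset (mem_union_right S (mem_sdiff.1 hi).1) subset_union_left)

theorem nine_half_le_sq_add {a e c : ℝ} (ha : 8 * c ≤ a ^ 2) (he : e ^ 2 ≤ c / 2) :
    9 / 2 * c ≤ (a + e) ^ 2 := by
  nlinarith [sq_nonneg (a + 4 * e)]

section Design

variable {n p : ℕ} (X : Fin p → EuclideanSpace ℝ (Fin n))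

theorem proj_apply (S : Finset (Fin p)) (y : EuclideanSpace ℝ (Fin n)) :
    proj X S y = (colSpan X S).starProjection y := rfl

theorem colSpan_insert (S : Finset (Fin p)) (i : Fin p) :
    colSpan X (insert i S) = colSpan X S ⊔ ℝ ∙ X i := by
  rw [colSpan, coe_insert, Set.image_insert_eq, Submodule.span_insert, sup_comm, colSpan]

theorem proj_mem_colSpan (S : Finset (Fin p)) (y : EuclideanSpace ℝ (Fin n)) :
    proj X S y ∈ colSpan X S :=
  Submodule.starProjection_apply_mem _ y

theorem sub_proj_eq_zero_of_mem {S : Finset (Fin p)} {j : Fin p} (hj : j ∈ S) :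
    X j - proj X S (X j) = 0 := by
  have hX : X j ∈ colSpan X S := Submodule.subset_span (Set.mem_image_of_mem X hj)
  rw [proj_apply, Submodule.starProjection_eq_self_iff.2 hX, sub_self]

theorem inner_sub_proj_sub_proj (S : Finset (Fin p)) (x y : EuclideanSpace ℝ (Fin n)) :
    ⟪x - proj X S x, y - proj X S y⟫ = ⟪x - proj X S x, y⟫ := by
  have h : ⟪proj X S y, x - proj X S x⟫ = 0 :=
    Submodule.sub_starProjection_mem_orthogonal (K := colSpan X S) x _ (proj_mem_colSpan X S y)
  rw [inner_sub_right, real_inner_comm (proj X S y), h, sub_zero]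

theorem norm_sq_sub_proj_le (S : Finset (Fin p)) (y : EuclideanSpace ℝ (Fin n)) :
    ‖y - proj X S y‖ ^ 2 ≤ ‖y‖ ^ 2 := by
  have h := Submodule.norm_sq_eq_add_norm_sq_starProjection y (colSpan X S)
  rw [Submodule.starProjection_orthogonal_val] at h
  rw [h]
  exact le_add_of_nonneg_left (sq_nonneg _)

theorem norm_sq_proj_insert (S : Finset (Fin p)) (j : Fin p) (y : EuclideanSpace ℝ (Fin n)) :
    ‖proj X (insert j S) y‖ ^ 2 =
      ‖proj X S y‖ ^ 2 + ⟪X j - proj X S (X j), y⟫ ^ 2 / ‖X j - proj X S (X j)‖ ^ 2 := by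
  simp only [proj_apply, colSpan_insert]
  exact (colSpan X S).norm_sq_starProjection_sup_span_singleton (X j) y

theorem trace_proj_insert {S : Finset (Fin p)} {j : Fin p} (hj : X j ∉ colSpan X S) :
    LinearMap.trace ℝ _ (proj X (insert j S)) = LinearMap.trace ℝ _ (proj X S) + 1 := by
  have htrace : ∀ S, LinearMap.trace ℝ _ (proj X S) = Module.finrank ℝ (colSpan X S) :=
    fun S => Submodule.trace_starProjection _
  rw [htrace, htrace, colSpan_insert, Submodule.finrank_sup_span_singleton hj, Nat.cast_succ]

theorem sub_proj_sum_smul (S T : Finset (Fin p)) (θ : Fin p → ℝ) :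
    (∑ k ∈ T, θ k • X k) - proj X S (∑ k ∈ T, θ k • X k) =
      ∑ k ∈ T \ S, θ k • (X k - proj X S (X k)) := by
  simp only [map_sum, map_smul, ← sum_sub_distrib, ← smul_sub]
  refine (sum_subset sdiff_subset fun k hkT hk => ?_).symm
  rw [sub_proj_eq_zero_of_mem X (by simpa [hkT] using hk), smul_zero]

variable {X}

theorem RECond.mul_sum_sq_le_norm_sq_sub_proj {ν : ℝ} {m : ℕ} (hRE : RECond X ν m) (hν : 0 ≤ ν)
    {S T : Finset (Fin p)} (hcard : (T ∪ S).card ≤ m) (θ : Fin p → ℝ) :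
    n * ν * ∑ j ∈ T \ S, θ j ^ 2 ≤
      ‖(∑ k ∈ T, θ k • X k) - proj X S (∑ k ∈ T, θ k • X k)‖ ^ 2 := by
  obtain ⟨w, hw⟩ := (Submodule.mem_span_image_finset_iff_exists_fun' ℝ).1
    (proj_mem_colSpan X S (∑ k ∈ T, θ k • X k))
  -- The residual combines the columns in `T ∪ S` with coefficients equal to `θ` on `T \ S`.
  set c : Fin p → ℝ := fun k => (if k ∈ T then θ k else 0) - if k ∈ S then w k else 0
  have hrepr : (∑ k ∈ T, θ k • X k) - proj X S (∑ k ∈ T, θ k • X k) =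
      ∑ k ∈ T ∪ S, c k • X k := by
    simp only [c, sub_smul, sum_sub_distrib, ite_smul, zero_smul, sum_ite_mem,
      union_inter_cancel_left, union_inter_cancel_right, hw]
  have hsum : ∑ j ∈ T \ S, θ j ^ 2 ≤ ∑ j ∈ T ∪ S, c j ^ 2 := by
    have hc : ∑ j ∈ T \ S, θ j ^ 2 = ∑ j ∈ T \ S, c j ^ 2 := sum_congr rfl fun j hj => by
      rw [mem_sdiff] at hj
      simp only [c, if_pos hj.1, if_neg hj.2, sub_zero]
    rw [hc]
    exact sum_le_sum_of_subset_of_nonneg (sdiff_subset.trans subset_union_left)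
      fun _ _ _ => sq_nonneg _
  calc n * ν * ∑ j ∈ T \ S, θ j ^ 2 ≤ n * ν * ∑ j ∈ T ∪ S, c j ^ 2 := by gcongr
    _ ≤ _ := hrepr ▸ hRE _ hcard c

theorem RECond.mul_le_norm_sq_sub_proj {ν : ℝ} {m : ℕ} (hRE : RECond X ν m) (hν : 0 ≤ ν)
    {S : Finset (Fin p)} (hcard : S.card < m) {j : Fin p} (hj : j ∉ S) :
    n * ν ≤ ‖X j - proj X S (X j)‖ ^ 2 := by
  have hcard' : ({j} ∪ S).card ≤ m := (card_union_le _ _).trans (by simpa [add_comm] using hcard)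
  have h := hRE.mul_sum_sq_le_norm_sq_sub_proj hν hcard' (Pi.single j 1)
  rw [sdiff_eq_self_of_disjoint (disjoint_singleton_left.2 hj)] at h
  simpa using h

theorem RECond.le_inner_sq_div_of_isMax {ν : ℝ} {m : ℕ} (hRE : RECond X ν m) (hν : 0 < ν)
    (hn : 0 < n) (hXn : ∀ j, ‖X j‖ ^ 2 ≤ n) {S T : Finset (Fin p)} (hcard : (T ∪ S).card ≤ m)
    {θ : Fin p → ℝ} {b : ℝ} (hb : 0 < b) (hmin : ∀ j ∈ T \ S, b ≤ θ j ^ 2)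
    {i : Fin p} (hi : i ∈ T \ S)
    (himax : ∀ j ∈ T \ S, ‖proj X (insert j S) (∑ k ∈ T, θ k • X k)‖ ≤
      ‖proj X (insert i S) (∑ k ∈ T, θ k • X k)‖) :
    n * ν ^ 2 * b ≤
      ⟪X i - proj X S (X i), ∑ k ∈ T, θ k • X k⟫ ^ 2 / ‖X i - proj X S (X i)‖ ^ 2 := by
  set μ := ∑ k ∈ T, θ k • X k
  set v : Fin p → EuclideanSpace ℝ (Fin n) := fun j => X j - proj X S (X j)
  set q : Fin p → ℝ := fun j => ⟪v j, μ⟫ ^ 2 / ‖v j‖ ^ 2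
  set t := ∑ j ∈ T \ S, θ j ^ 2
  have hq : ∀ j ∈ T \ S, q j ≤ q i := fun j hj => by
    have h := pow_le_pow_left₀ (norm_nonneg _) (himax j hj) 2
    rw [norm_sq_proj_insert, norm_sq_proj_insert] at h
    linarith
  have hinner : ∀ j ∈ T \ S, ⟪v j, ∑ k ∈ T \ S, θ k • v k⟫ ^ 2 ≤ q i * n := fun j hj => by
    have hvj : ⟪v j, μ⟫ ^ 2 = q j * ‖v j‖ ^ 2 := by
      rcases eq_or_ne (v j) 0 with h0 | h0
      · simp [q, h0]
      · exact (div_mul_cancel₀ _ (pow_ne_zero 2 (norm_ne_zero_iff.2 h0))).symm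
    rw [← sub_proj_sum_smul, inner_sub_proj_sub_proj, hvj]
    exact mul_le_mul (hq j hj) ((norm_sq_sub_proj_le X S (X j)).trans (hXn j)) (sq_nonneg _)
      (div_nonneg (sq_nonneg _) (sq_nonneg _))
  have hcs := sq_norm_sq_sum_smul_le (T \ S) v θ hinner
  rw [← sub_proj_sum_smul] at hcs
  have hre := hRE.mul_sum_sq_le_norm_sq_sub_proj hν.le hcard θ
  have hbt : #(T \ S) * b ≤ t := by simpa using card_nsmul_le_sum _ _ b hmin
  have hB : (0 : ℝ) < #(T \ S) := by exact_mod_cast card_pos.2 ⟨i, hi⟩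
  have ht : 0 < t := (mul_pos hB hb).trans_le hbt
  have hnt : (0 : ℝ) < n * t := mul_pos (by exact_mod_cast hn) ht
  have hqt : n * ν ^ 2 * t ≤ #(T \ S) * q i := by
    refine le_of_mul_le_mul_right ?_ hnt
    calc n * ν ^ 2 * t * (n * t) = (n * ν * t) ^ 2 := by ring
      _ ≤ t * (#(T \ S) * (q i * n)) := (pow_le_pow_left₀ (by positivity) hre 2).trans hcs
      _ = #(T \ S) * q i * (n * t) := by ring
  refine le_of_mul_le_mul_left ?_ hB
  calc #(T \ S) * (n * ν ^ 2 * b) = n * ν ^ 2 * (#(T \ S) * b) := by ring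
    _ ≤ n * ν ^ 2 * t := by gcongr
    _ ≤ #(T \ S) * q i := hqt

theorem log_postPi_insert_div {s : ℕ} (Y : EuclideanSpace ℝ (Fin n)) (β D : ℝ)
    {S : Finset (Fin p)} {i : Fin p} (hiS : i ∉ S) (hX : X i ∉ colSpan X S)
    (hcard : S.card + 1 ≤ 4 * s) :
    Real.log (postPi X Y β D s (insert i S) / postPi X Y β D s S) =
      (‖proj X (insert i S) Y‖ ^ 2 - ‖proj X S Y‖ ^ 2) / β - D * Real.log p - 2 / β := by
  have hZ : 0 < ∑ S', postWt X Y β D s S' := sum_pos (fun _ _ => Real.exp_pos _) univ_nonempty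
  rw [postPi, postPi, div_div_div_cancel_right₀ hZ.ne', postWt, postWt, ← Real.exp_sub,
    Real.log_exp, card_insert_of_notMem hiS, trace_proj_insert X hX, if_neg (by omega),
    if_neg (by omega)]
  push_cast
  ring

end Design

theorem stmt7_general {n p s : ℕ} (hn : 0 < n) (hp : 2 ≤ p)
    (X : Fin p → EuclideanSpace ℝ (Fin n))
    (hX : ∀ j, ‖X j‖ = Real.sqrt n)
    {ν : ℝ} (hν : 0 < ν) (hRE : RECond X ν (6 * s))
    (θ : Fin p → ℝ) (T : Finset (Fin p)) (hT : T = Finset.univ.filter fun j => θ j ≠ 0)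
    (hTcard : T.card = s)
    (ε Y : EuclideanSpace ℝ (Fin n)) (hY : Y = (∑ j, θ j • X j) + ε)
    (β D L : ℝ) (hβ : 0 < β) (hD : 0 < D)
    (hE : ∀ S : Finset (Fin p), S.card < 6 * s → ∀ j ∉ S,
      (inner ℝ (X j - proj X S (X j)) ε : ℝ) ^ 2 ≤ (n : ℝ) * L * ν * Real.log p)
    (hmin : ∀ j ∈ T, 8 * β * D * Real.log p / ((n : ℝ) * ν ^ 2) ≤ θ j ^ 2)
    (hβD : 2 * L ≤ β * D) (hβD' : 2 / β ≤ 3 * D * Real.log p)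
    (S : Finset (Fin p)) (hScard : (S \ T).card ≤ 3 * s)
    (i : Fin p) (hiB : i ∈ T \ S)
    (himax : ∀ j ∈ T \ S,
      ‖proj X (insert j S) (∑ k, θ k • X k)‖ ≤ ‖proj X (insert i S) (∑ k, θ k • X k)‖) :
    (D / 2) * Real.log p ≤
      Real.log (postPi X Y β D s (insert i S) / postPi X Y β D s S) := by
  have hiS : i ∉ S := (mem_sdiff.1 hiB).2
  have hlog : 0 < Real.log p := Real.log_pos (by exact_mod_cast hp)
  have hnν : (0 : ℝ) < n * ν := by positivity
  have hS : S.card + 1 ≤ 4 * s := by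
    have := card_add_one_le_card_sdiff_add_card hiB
    omega
  have hμ : ∑ k, θ k • X k = ∑ k ∈ T, θ k • X k :=
    (sum_subset (subset_univ T) fun k _ hk => by simp_all).symm
  set v := X i - proj X S (X i)
  have hv : n * ν ≤ ‖v‖ ^ 2 := hRE.mul_le_norm_sq_sub_proj hν.le (by omega) hiS
  have hvpos : 0 < ‖v‖ ^ 2 := hnν.trans_le hv
  have hsignal : 8 * (β * D * Real.log p * ‖v‖ ^ 2) ≤ ⟪v, ∑ k, θ k • X k⟫ ^ 2 := by
    have h := hRE.le_inner_sq_div_of_isMax hν hn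
      (fun j => by rw [hX j, Real.sq_sqrt n.cast_nonneg])
      ((card_union_le T S).trans (by omega)) (by positivity)
      (fun j hj => hmin j (mem_sdiff.1 hj).1) hiB (hμ ▸ himax)
    rw [mul_div_cancel₀ _ (by positivity), ← hμ, le_div_iff₀ hvpos] at h
    linarith
  have hnoise : ⟪v, ε⟫ ^ 2 ≤ β * D * Real.log p * ‖v‖ ^ 2 / 2 :=
    calc ⟪v, ε⟫ ^ 2 ≤ n * L * ν * Real.log p := hE S (by omega) i hiS
      _ ≤ β * D * Real.log p * (n * ν) / 2 := by nlinarith [mul_pos hnν hlog]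
      _ ≤ β * D * Real.log p * ‖v‖ ^ 2 / 2 := by gcongr
  have hgain : 9 / 2 * (β * D * Real.log p) ≤ ⟪v, Y⟫ ^ 2 / ‖v‖ ^ 2 := by
    rw [le_div_iff₀ hvpos, hY, inner_add_right, mul_assoc]
    exact nine_half_le_sq_add hsignal hnoise
  have hXS : X i ∉ colSpan X S := fun h => by
    simp [v, proj_apply, Submodule.starProjection_eq_self_iff.2 h] at hvpos
  rw [log_postPi_insert_div Y β D hiS hXS hS, norm_sq_proj_insert, add_sub_cancel_left,
    le_sub_iff_add_le, le_sub_iff_add_le, le_div_iff₀ hβ]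
  linarith [mul_le_mul_of_nonneg_right hβD' hβ.le, div_mul_cancel₀ (2 : ℝ) hβ.ne']

/-- for S with T ⊄ S, |S \ T| ≤ 3s*, B = T \ S, and i ∈ B maximizing
‖Φ_{S∪{j}} Xθ‖ over j ∈ B: under E_n, the beta-min condition, βD ≥ 2L and 2/β ≤ 3D log p,
log(π(S ∪ {i})/π(S)) ≥ (D/2) log p. -/
theorem stmt7 {n p s : ℕ} (hn : 0 < n) (hp : 2 ≤ p) (hs : 0 < s) (hsp : 6 * s ≤ p)
    (X : Fin p → EuclideanSpace ℝ (Fin n))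
    (hX : ∀ j, ‖X j‖ = Real.sqrt n)
    {ν : ℝ} (hν : 0 < ν) (hRE : RECond X ν (6 * s))
    (θ : Fin p → ℝ) (T : Finset (Fin p)) (hT : T = Finset.univ.filter fun j => θ j ≠ 0)
    (hTcard : T.card = s)
    (ε Y : EuclideanSpace ℝ (Fin n)) (hY : Y = (∑ j, θ j • X j) + ε)
    (β D L : ℝ) (hβ : 0 < β) (hD : 0 < D) (hL : 0 < L)
    (hE : ∀ S : Finset (Fin p), S.card < 6 * s → ∀ j ∉ S,
      (inner ℝ (X j - proj X S (X j)) ε : ℝ) ^ 2 ≤ (n : ℝ) * L * ν * Real.log p)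
    (hmin : ∀ j ∈ T, 8 * β * D * Real.log p / ((n : ℝ) * ν ^ 2) ≤ θ j ^ 2)
    (hβD : 2 * L ≤ β * D) (hβD' : 2 / β ≤ 3 * D * Real.log p)
    (S : Finset (Fin p)) (hTS : ¬ T ⊆ S) (hScard : (S \ T).card ≤ 3 * s)
    (i : Fin p) (hiB : i ∈ T \ S)
    (himax : ∀ j ∈ T \ S,
      ‖proj X (insert j S) (∑ k, θ k • X k)‖ ≤ ‖proj X (insert i S) (∑ k, θ k • X k)‖) :
    (D / 2) * Real.log p ≤
      Real.log (postPi X Y β D s (insert i S) / postPi X Y β D s S) :=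
  stmt7_general hn hp X hX hν hRE θ T hT hTcard ε Y hY β D L hβ hD hE hmin hβD hβD' S hScard i hiB
    himax

end
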